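/- arXiv:math-ph/0407076 — 2 statements merged into one kernel-verified Lean document; each statement's English description precedes it below -/
import Mathlib

section
/- Let L be a finite poset and Δ the abstract simplex whose vertices are the maximal chains of L; for x ∈ L let Δ_x be the face of Δ spanned by maximal chains containing x. Then for any subset S ⊆ L, the intersection ⋂_{x ∈ S} Δ_x is nonempty if and only if S is a chain in L. -/
open Set

theorem exists_flag_superset_iff_isChain {α : Type*} [PartialOrder α] {s : Set α} :
    (∃ f : Flag α, s ⊆ f) ↔ IsChain (· ≤ ·) s := by
  constructor
  · rintro ⟨f, hsf⟩
    exact f.chain_le.mono hsf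
  · intro hs
    obtain ⟨M, hM, hsM⟩ := hs.exists_maxChain
    exact ⟨.ofIsMaxChain M hM, hsM⟩

theorem inter_flagFaces_nonempty_iff_isChain_general {L : Type*} [PartialOrder L]
    (S : Set L) :
    (⋂ x ∈ S, {f : Flag L | x ∈ f}).Nonempty ↔ IsChain (· ≤ ·) S := by
  simp only [Set.Nonempty, mem_iInter, mem_ofPred_eq]
  exact exists_flag_superset_iff_isChain

/-- let `L` be a finite poset, and for `x ∈ L` let `Δ_x` be the face of the
simplex on the maximal chains (flags) of `L` spanned by the maximal chains containing `x`,
identified with its vertex set `{f : Flag L | x ∈ f}`.  For any `S ⊆ L`, the faces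
`Δ_x`, `x ∈ S`, have a common vertex (equivalently, a common point) iff `S` is a chain. -/
theorem inter_flagFaces_nonempty_iff_isChain {L : Type*} [PartialOrder L] [Fintype L]
    (S : Set L) :
    (⋂ x ∈ S, {f : Flag L | x ∈ f}).Nonempty ↔ IsChain (· ≤ ·) S :=
  inter_flagFaces_nonempty_iff_isChain_general S
end

section
/- Let L be a finite poset, Δ the simplex on its maximal chains, and Δ_y the face spanned by maximal chains through y. Suppose L_a ⊆ L is a subset possessing a maximum element x such that every subset {y_i} ⊆ L_a with ⋂ Δ_{y_i} ≠ ∅ is a chain extendable by x. Then the simplicial set ⋃_{y ∈ L_a} Δ_y is contractible. -/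
open Set

/-- The geometric realization (inside the geometric simplex on the vertex set `Flag L` of
maximal chains of `L`) of the union of the faces `Δ_y`, `y ∈ La`, where `Δ_y` is spanned
by the maximal chains containing `y`. -/
def unionFacesRealization (L : Type*) [PartialOrder L] [Fintype (Flag L)]
    (La : Set L) : Set (Flag L → ℝ) :=
  {w | (∀ f, 0 ≤ w f) ∧ (∑ f, w f = 1) ∧ ∃ y ∈ La, ∀ f, w f ≠ 0 → y ∈ f}

/-- if `La ⊆ L` has a maximum element `x` such that every subfamily of
`{Δ_y | y ∈ La}` with nonempty intersection corresponds to a chain extendable by `x`,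
then the simplicial set `⋃_{y ∈ La} Δ_y` is contractible. -/
theorem unionFaces_contractible {L : Type*} [PartialOrder L] [Fintype L]
    [Fintype (Flag L)] (La : Set L) (x : L) (hxmem : x ∈ La)
    (hxmax : ∀ y ∈ La, y ≤ x)
    (hchain : ∀ S ⊆ La, (⋂ y ∈ S, {f : Flag L | y ∈ f}).Nonempty →
      IsChain (· ≤ ·) (insert x S)) :
    ContractibleSpace ↥(unionFacesRealization L La) := by
  classical
  set U := unionFacesRealization L La with hU
  -- `φ f` : a flag containing `x` and all elements of `f ∩ La`.
  have hφ : ∀ f : Flag L, ∃ g : Flag L, x ∈ g ∧ ∀ z ∈ La, z ∈ f → z ∈ g := by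
    intro f
    have hchain' : IsChain (· ≤ ·) (insert x ((f : Set L) ∩ La)) := by
      refine IsChain.insert ?_ ?_
      · exact f.Chain'.mono (Set.inter_subset_left)
      · intro b hb _; exact Or.inr (hxmax b hb.2)
    obtain ⟨M, hM, hsub⟩ := hchain'.exists_maxChain
    refine ⟨Flag.ofIsMaxChain M hM, hsub (Set.mem_insert _ _), fun z hz hzf => ?_⟩
    exact hsub (Set.mem_insert_iff.mpr (Or.inr ⟨hzf, hz⟩))
  choose φ hφx hφmem using hφ
  -- a flag containing `x`
  obtain ⟨M₀, hM₀, hsub₀⟩ := (Set.Subsingleton.isChain (r := (· ≤ ·))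
    (Set.subsingleton_singleton (a := x))).exists_maxChain
  set F₀ : Flag L := Flag.ofIsMaxChain M₀ hM₀ with hF₀
  have hxF₀ : x ∈ F₀ := hsub₀ rfl
  -- the linear map pushing mass from `f` to `φ f`
  set Φ : (Flag L → ℝ) → (Flag L → ℝ) :=
    fun w g => ∑ f ∈ Finset.univ.filter (fun f => φ f = g), w f with hΦ
  have Φcont : Continuous Φ := by
    refine continuous_pi fun g => ?_
    exact continuous_finset_sum _ fun f _ => continuous_apply f
  have Φnonneg : ∀ w : Flag L → ℝ, (∀ f, 0 ≤ w f) → ∀ g, 0 ≤ Φ w g := by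
    intro w hw g
    exact Finset.sum_nonneg fun f _ => hw f
  have Φsum : ∀ w : Flag L → ℝ, ∑ g, Φ w g = ∑ f, w f := by
    intro w
    exact Finset.sum_fiberwise Finset.univ φ w
  have Φsupp : ∀ w : Flag L → ℝ, ∀ g, Φ w g ≠ 0 → ∃ f, φ f = g ∧ w f ≠ 0 := by
    intro w g h
    by_contra hc
    push_neg at hc
    refine h (Finset.sum_eq_zero fun f hf => ?_)
    rcases Finset.mem_filter.mp hf with ⟨_, hfg⟩
    by_contra hw
    exact hw (hc f hfg)
  -- the constant point: vertex at `F₀`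
  set v : Flag L → ℝ := fun g => if g = F₀ then 1 else 0 with hv
  have hvU : v ∈ U := by
    refine ⟨fun f => by by_cases h : f = F₀ <;> simp [hv, h], ?_, x, hxmem, ?_⟩
    · simp [hv]
    · intro f hf
      by_cases h : f = F₀
      · subst h; exact hxF₀
      · simp [hv, h] at hf
  -- segment 1 stays in U
  have seg1 : ∀ w ∈ U, ∀ t : ℝ, 0 ≤ t → t ≤ 1 →
      (fun g => (1 - t) * w g + t * Φ w g) ∈ U := by
    rintro w ⟨hw0, hw1, y, hy, hyw⟩ t ht0 ht1
    refine ⟨fun g => add_nonneg (mul_nonneg (by linarith) (hw0 g))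
      (mul_nonneg ht0 (Φnonneg w hw0 g)), ?_, y, hy, ?_⟩
    · rw [Finset.sum_add_distrib, ← Finset.mul_sum, ← Finset.mul_sum, Φsum, hw1]
      ring
    · intro g hg
      have h1 : (1 - t) * w g ≠ 0 ∨ t * Φ w g ≠ 0 := by
        by_contra hc
        push_neg at hc
        exact hg (show (1 - t) * w g + t * Φ w g = 0 by rw [hc.1, hc.2, add_zero])
      rcases h1 with h1 | h1
      · exact hyw g (fun h => h1 (by rw [h, mul_zero]))
      · have hΦg : Φ w g ≠ 0 := fun h => h1 (by rw [h, mul_zero])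
        obtain ⟨f, hfg, hwf⟩ := Φsupp w g hΦg
        rw [← hfg]
        exact hφmem f y hy (hyw f hwf)
  -- segment 2 stays in U
  have seg2 : ∀ w ∈ U, ∀ t : ℝ, 0 ≤ t → t ≤ 1 →
      (fun g => (1 - t) * Φ w g + t * v g) ∈ U := by
    rintro w ⟨hw0, hw1, y, hy, hyw⟩ t ht0 ht1
    have hv0 : ∀ g, 0 ≤ v g := fun g => by by_cases h : g = F₀ <;> simp [hv, h]
    refine ⟨fun g => add_nonneg (mul_nonneg (by linarith) (Φnonneg w hw0 g))
      (mul_nonneg ht0 (hv0 g)), ?_, x, hxmem, ?_⟩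
    · rw [Finset.sum_add_distrib, ← Finset.mul_sum, ← Finset.mul_sum, Φsum, hw1]
      have : ∑ g, v g = 1 := by simp [hv]
      rw [this]; ring
    · intro g hg
      have h1 : (1 - t) * Φ w g ≠ 0 ∨ t * v g ≠ 0 := by
        by_contra hc
        push_neg at hc
        exact hg (show (1 - t) * Φ w g + t * v g = 0 by rw [hc.1, hc.2, add_zero])
      rcases h1 with h1 | h1
      · have hΦg : Φ w g ≠ 0 := fun h => h1 (by rw [h, mul_zero])
        obtain ⟨f, hfg, _⟩ := Φsupp w g hΦg
        rw [← hfg]; exact hφx f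
      · have hvg : v g ≠ 0 := fun h => h1 (by rw [h, mul_zero])
        have : g = F₀ := by
          by_contra h; exact hvg (by simp [hv, h])
        rw [this]; exact hxF₀
  -- `Φ` as a self-map of `U`
  have ΦmemU : ∀ w ∈ U, Φ w ∈ U := by
    intro w hw
    have := seg2 w hw 0 le_rfl zero_le_one
    simpa using this
  let Φm : C(U, U) :=
    ⟨fun u => ⟨Φ u.1, ΦmemU u.1 u.2⟩,
      Continuous.subtype_mk (Φcont.comp continuous_subtype_val) _⟩
  let vm : C(U, U) := ContinuousMap.const U ⟨v, hvU⟩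
  -- homotopy from `id` to `Φm`
  have cont1 : Continuous (fun p : unitInterval × U =>
      (fun g => (1 - (p.1 : ℝ)) * (p.2 : Flag L → ℝ) g + (p.1 : ℝ) * Φ (p.2 : Flag L → ℝ) g)) := by
    have hc1 : Continuous fun p : unitInterval × U => (p.1 : ℝ) :=
      continuous_subtype_val.comp continuous_fst
    have hc2 : Continuous fun p : unitInterval × U => (p.2 : Flag L → ℝ) :=
      continuous_subtype_val.comp continuous_snd
    refine continuous_pi fun g => ?_
    exact ((continuous_const.sub hc1).mul ((continuous_apply g).comp hc2)).add
      (hc1.mul ((continuous_apply g).comp (Φcont.comp hc2)))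
  let H₁ : ContinuousMap.Homotopy (ContinuousMap.id U) Φm :=
    { toFun := fun p => ⟨fun g => (1 - (p.1 : ℝ)) * (p.2 : Flag L → ℝ) g +
        (p.1 : ℝ) * Φ (p.2 : Flag L → ℝ) g,
        seg1 _ p.2.2 _ p.1.2.1 p.1.2.2⟩
      continuous_toFun := Continuous.subtype_mk cont1 _
      map_zero_left := by intro u; ext g; simp
      map_one_left := by intro u; ext g; simp [Φm] }
  -- homotopy from `Φm` to the constant map
  have cont2 : Continuous (fun p : unitInterval × U =>
      (fun g => (1 - (p.1 : ℝ)) * Φ (p.2 : Flag L → ℝ) g + (p.1 : ℝ) * v g)) := by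
    have hc1 : Continuous fun p : unitInterval × U => (p.1 : ℝ) :=
      continuous_subtype_val.comp continuous_fst
    have hc2 : Continuous fun p : unitInterval × U => (p.2 : Flag L → ℝ) :=
      continuous_subtype_val.comp continuous_snd
    refine continuous_pi fun g => ?_
    exact ((continuous_const.sub hc1).mul ((continuous_apply g).comp (Φcont.comp hc2))).add
      (hc1.mul continuous_const)
  let H₂ : ContinuousMap.Homotopy Φm vm :=
    { toFun := fun p => ⟨fun g => (1 - (p.1 : ℝ)) * Φ (p.2 : Flag L → ℝ) g + (p.1 : ℝ) * v g,
        seg2 _ p.2.2 _ p.1.2.1 p.1.2.2⟩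
      continuous_toFun := Continuous.subtype_mk cont2 _
      map_zero_left := by intro u; ext g; simp [Φm]
      map_one_left := by intro u; ext g; simp [vm] }
  have hnull : (ContinuousMap.id U).Nullhomotopic := ⟨⟨v, hvU⟩, ⟨H₁.trans H₂⟩⟩
  exact (contractible_iff_id_nullhomotopic U).mpr hnull
end
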